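/- Let f be computed by a skip-connections augmented deep Heaviside network with L hidden layers, width vector (d, p_1,…,p_L, 1), and skip connection vector (s_2,…,s_L) (meaning at most s_ℓ rows of the skip matrix into layer ℓ are non-zero). Then for any x₁, x₂ ∈ [0,1]^d, the function t ↦ f((1−t)x₁ + t x₂) on [0,1] is piecewise constant with at most (p₁+1)·∏_{ℓ=2}^L (s_ℓ+1) pieces. -/

import Mathlib

/-!
Along the segment `t ↦ (1 - t) • x₁ + t • x₂` every pre-activation is affine in `t` as long as
the previous layer is constant, so each neuron, a Heaviside function of it, switches at most once.
Counting the neurons that have switched gives a monotone `ℕ`-valued function of `t`; its level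
sets are intervals on which the layer is constant. In layer 1 all `p₁` neurons may switch, giving
`p₁ + 1` intervals. On an interval where layer `ℓ` is constant, only the neurons of layer `ℓ + 1`
fed by one of the at most `s_{ℓ+1}` nonzero rows of `V_ℓ` depend on `t`, so that interval splits
into at most `s_{ℓ+1} + 1` pieces.
-/

noncomputable def heaviside (t : ℝ) : ℝ := if 0 ≤ t then 1 else 0

/-- Hidden-layer functions of a skip-connections augmented deep Heaviside
network: `f⁽ℓ⁺¹⁾(x) = σ₀(W_ℓ f⁽ℓ⁾(x) + V_ℓ x − b_ℓ)`. -/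
noncomputable def skipDhnHidden (p : ℕ → ℕ)
    (W : ∀ ℓ : ℕ, Matrix (Fin (p (ℓ + 1))) (Fin (p ℓ)) ℝ)
    (V : ∀ ℓ : ℕ, Matrix (Fin (p (ℓ + 1))) (Fin (p 0)) ℝ)
    (b : ∀ ℓ : ℕ, Fin (p (ℓ + 1)) → ℝ) :
    (ℓ : ℕ) → (Fin (p 0) → ℝ) → Fin (p ℓ) → ℝ
  | 0, x => x
  | (ℓ + 1), x => fun j =>
      heaviside ((W ℓ).mulVec (skipDhnHidden p W V b ℓ x) j + (V ℓ).mulVec x j - b ℓ j)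

/-- `g : ℝ → ℝ` is piecewise constant on `[0,1]` with at most `m` pieces. -/
def PiecewiseConstOn (g : ℝ → ℝ) (m : ℕ) : Prop :=
  ∃ A : Fin m → Set ℝ,
    (∀ i, (A i).OrdConnected) ∧
    (Pairwise fun i j => Disjoint (A i) (A j)) ∧
    (⋃ i, A i) = Set.Icc (0 : ℝ) 1 ∧
    ∀ i, ∀ x ∈ A i, ∀ y ∈ A i, g x = g y

open Function Matrix

structure IsConstPartition {α ι : Type*} (g : ℝ → α) (A : Set ℝ) (B : ι → Set ℝ) : Prop where
  ordConnected : ∀ i, (B i).OrdConnected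
  pairwise_disjoint : Pairwise (Disjoint on B)
  iUnion_eq : ⋃ i, B i = A
  const : ∀ i, ∀ x ∈ B i, ∀ y ∈ B i, g x = g y

namespace IsConstPartition

variable {α β ι κ : Type*} {g : ℝ → α} {A : Set ℝ} {B : ι → Set ℝ}

lemma subset (h : IsConstPartition g A B) (i : ι) : B i ⊆ A :=
  h.iUnion_eq ▸ Set.subset_iUnion B i

lemma exists_eq [Nonempty α] (h : IsConstPartition g A B) (i : ι) :
    ∃ c, ∀ x ∈ B i, g x = c := by
  rcases (B i).eq_empty_or_nonempty with hB | ⟨x₀, hx₀⟩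
  · exact ⟨Classical.arbitrary α, by simp [hB]⟩
  · exact ⟨g x₀, fun x hx => h.const i x hx x₀ hx₀⟩

lemma of_eq_imp {g' : ℝ → β} (h : IsConstPartition g A B)
    (hg : ∀ x ∈ A, ∀ y ∈ A, g x = g y → g' x = g' y) : IsConstPartition g' A B where
  __ := h
  const i x hx y hy := hg x (h.subset i hx) y (h.subset i hy) (h.const i x hx y hy)

lemma comp_equiv (h : IsConstPartition g A B) (e : κ ≃ ι) : IsConstPartition g A (B ∘ e) where
  ordConnected i := h.ordConnected (e i)
  pairwise_disjoint _ _ hij := h.pairwise_disjoint (e.injective.ne hij)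
  iUnion_eq := (e.surjective.iUnion_comp B).trans h.iUnion_eq
  const i := h.const (e i)

lemma exists_fin [Fintype ι] {m : ℕ} (h : IsConstPartition g A B) (hm : Fintype.card ι = m) :
    ∃ B' : Fin m → Set ℝ, IsConstPartition g A B' :=
  ⟨_, h.comp_equiv (Fintype.equivFinOfCardEq hm).symm⟩

lemma refine {C : ι → κ → Set ℝ} (hB : Pairwise (Disjoint on B)) (hA : ⋃ i, B i = A)
    (hC : ∀ i, IsConstPartition g (B i) (C i)) :
    IsConstPartition g A (fun q : ι × κ => C q.1 q.2) where
  ordConnected q := (hC q.1).ordConnected q.2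
  pairwise_disjoint := by
    rintro ⟨i, r⟩ ⟨i', r'⟩ hne
    by_cases hi : i = i'
    · subst hi
      exact (hC i).pairwise_disjoint fun hr => hne (congrArg _ hr)
    · exact (hB hi).mono ((hC i).subset r) ((hC i').subset r')
  iUnion_eq := by
    simp only [Set.iUnion_prod' (fun q : ι × κ => C q.1 q.2), (hC _).iUnion_eq, hA]
  const q := (hC q.1).const q.2

lemma of_comp_strictMono [PartialOrder α] [Preorder β] {T : ℝ → α} {φ : α → β}
    (hT : Monotone T) (hφ : StrictMono φ) (h : IsConstPartition (φ ∘ T) A B) :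
    IsConstPartition T A B where
  __ := h
  const i x hx y hy := by
    have hxy := h.const i x hx y hy
    rcases le_total x y with hle | hle
    · exact (hT hle).eq_of_not_lt fun hlt => (hφ hlt).ne hxy
    · exact ((hT hle).eq_of_not_lt fun hlt => (hφ hlt).ne hxy.symm).symm

end IsConstPartition

lemma exists_isConstPartition_of_monotone {A : Set ℝ} (hA : A.OrdConnected) {F : ℝ → ℕ}
    (hF : Monotone F) {k : ℕ} (hk : ∀ t ∈ A, F t ≤ k) :
    ∃ B : Fin (k + 1) → Set ℝ, IsConstPartition F A B := by
  refine ⟨fun r => A ∩ F ⁻¹' {(r : ℕ)},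
    fun r => hA.inter (Set.ordConnected_singleton.preimage_mono hF),
    fun r r' hne => Set.disjoint_left.2 fun t ht ht' => hne (Fin.ext (ht.2.symm.trans ht'.2)), ?_,
    fun r x hx y hy => hx.2.trans hy.2.symm⟩
  ext t
  simp only [Set.mem_iUnion, Set.mem_inter_iff, Set.mem_preimage, Set.mem_singleton_iff]
  exact ⟨fun ⟨_, ht, _⟩ => ht, fun ht => ⟨⟨F t, Nat.lt_succ_of_le (hk t ht)⟩, ht, rfl⟩⟩

lemma heaviside_congr {a b : ℝ} (h : 0 ≤ a ↔ 0 ≤ b) : heaviside a = heaviside b :=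
  if_congr h rfl rfl

/-- Monotone as a `Prop`-valued map: the predicate switches from false to true at most once. -/
lemma monotone_nonneg_affine_iff_nonneg (a b : ℝ) : Monotone fun t => (0 ≤ a * t + b ↔ 0 ≤ a) := by
  intro t t' htt'
  by_cases ha : 0 ≤ a
  · simp only [ha, iff_true, le_Prop_eq]
    intro h
    nlinarith
  · simp only [ha, iff_false, le_Prop_eq, not_le]
    intro h
    nlinarith

/-- Only the coordinates in `J` vary along `t`, and each of them switches at most once,
so the number of switched coordinates is a monotone count bounded by `#J`. -/
lemma exists_isConstPartition_heaviside_affine {n k : ℕ} {A : Set ℝ} (hA : A.OrdConnected)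
    (J : Finset (Fin n)) (hJ : J.card ≤ k) (α β : Fin n → ℝ) (hα : ∀ j ∉ J, α j = 0) :
    ∃ B : Fin (k + 1) → Set ℝ,
      IsConstPartition (fun t j => heaviside (α j * t + β j)) A B := by
  classical
  set T : ℝ → Finset (Fin n) := fun t => J.filter fun j => (0 ≤ α j * t + β j ↔ 0 ≤ α j)
  have hT : Monotone T := fun t t' htt' =>
    Finset.monotone_filter_right J fun j _ => monotone_nonneg_affine_iff_nonneg (α j) (β j) htt'
  obtain ⟨B, hB⟩ := exists_isConstPartition_of_monotone hA
    (Finset.card_strictMono.monotone.comp hT) fun t _ => (Finset.card_filter_le _ _).trans hJ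
  refine ⟨B, (hB.of_comp_strictMono hT Finset.card_strictMono).of_eq_imp fun t _ t' _ hTt => ?_⟩
  funext j
  by_cases hj : j ∈ J
  · have hmem : j ∈ T t ↔ j ∈ T t' := by rw [hTt]
    simp only [T, Finset.mem_filter, hj, true_and] at hmem
    exact heaviside_congr (by tauto)
  · simp [hα j hj]

lemma mulVec_segment {m n : ℕ} (M : Matrix (Fin m) (Fin n) ℝ) (x₁ x₂ : Fin n → ℝ) (t : ℝ) :
    M *ᵥ ((1 - t) • x₁ + t • x₂) = fun j => (M *ᵥ x₂ - M *ᵥ x₁) j * t + (M *ᵥ x₁) j := by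
  funext j
  simp only [mulVec_add, mulVec_smul, Pi.add_apply, Pi.sub_apply, Pi.smul_apply,
    smul_eq_mul]
  ring

lemma exists_isConstPartition_heaviside_mulVec_segment {m n k : ℕ} {A : Set ℝ}
    (hA : A.OrdConnected) (M : Matrix (Fin m) (Fin n) ℝ) (c : Fin m → ℝ) (J : Finset (Fin m))
    (hJ : J.card ≤ k) (hM : ∀ j ∉ J, M j = 0) (x₁ x₂ : Fin n → ℝ) :
    ∃ B : Fin (k + 1) → Set ℝ,
      IsConstPartition (fun t j => heaviside ((M *ᵥ ((1 - t) • x₁ + t • x₂)) j + c j)) A B := by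
  obtain ⟨B, hB⟩ := exists_isConstPartition_heaviside_affine hA J hJ
    (M *ᵥ x₂ - M *ᵥ x₁) (fun j => (M *ᵥ x₁) j + c j)
    fun j hj => by simp [Matrix.mulVec, dotProduct, hM j hj]
  refine ⟨B, hB.of_eq_imp fun t _ t' _ h => ?_⟩
  simpa only [mulVec_segment, add_assoc] using h

section SkipDhn

variable {p : ℕ → ℕ} {W : ∀ ℓ : ℕ, Matrix (Fin (p (ℓ + 1))) (Fin (p ℓ)) ℝ}
  {V : ∀ ℓ : ℕ, Matrix (Fin (p (ℓ + 1))) (Fin (p 0)) ℝ} {b : ∀ ℓ : ℕ, Fin (p (ℓ + 1)) → ℝ}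
  (x₁ x₂ : Fin (p 0) → ℝ)

lemma exists_isConstPartition_skipDhnHidden_one (hV0 : V 0 = 0) {A : Set ℝ}
    (hA : A.OrdConnected) :
    ∃ B : Fin (p 1 + 1) → Set ℝ,
      IsConstPartition (fun t => skipDhnHidden p W V b 1 ((1 - t) • x₁ + t • x₂)) A B := by
  obtain ⟨B, hB⟩ := exists_isConstPartition_heaviside_mulVec_segment hA (W 0) (-b 0)
    (k := p 1) Finset.univ (by simp) (fun j hj => absurd (Finset.mem_univ j) hj) x₁ x₂
  refine ⟨B, hB.of_eq_imp fun t _ t' _ h => ?_⟩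
  simpa only [skipDhnHidden, hV0, zero_mulVec, Pi.zero_apply, add_zero, Pi.neg_apply,
    ← sub_eq_add_neg] using h

lemma exists_isConstPartition_skipDhnHidden_succ (ℓ : ℕ) {A : Set ℝ} (hA : A.OrdConnected)
    (y : Fin (p ℓ) → ℝ) (hy : ∀ t ∈ A, skipDhnHidden p W V b ℓ ((1 - t) • x₁ + t • x₂) = y)
    {k : ℕ} (J : Finset (Fin (p (ℓ + 1)))) (hJ : J.card ≤ k) (hVJ : ∀ j ∉ J, V ℓ j = 0) :
    ∃ B : Fin (k + 1) → Set ℝ,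
      IsConstPartition (fun t => skipDhnHidden p W V b (ℓ + 1) ((1 - t) • x₁ + t • x₂)) A B := by
  obtain ⟨B, hB⟩ := exists_isConstPartition_heaviside_mulVec_segment hA (V ℓ)
    (W ℓ *ᵥ y - b ℓ) J hJ hVJ x₁ x₂
  have hpre (x : Fin (p 0) → ℝ) (j : Fin (p (ℓ + 1))) :
      (W ℓ *ᵥ y) j + (V ℓ *ᵥ x) j - b ℓ j = (V ℓ *ᵥ x) j + (W ℓ *ᵥ y - b ℓ) j := by
    simp only [Pi.sub_apply]
    ring
  refine ⟨B, hB.of_eq_imp fun t ht t' ht' h => ?_⟩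
  simpa only [skipDhnHidden, hy t ht, hy t' ht', hpre] using h

open Classical in
lemma exists_isConstPartition_skipDhnHidden (s : ℕ → ℕ) (hV0 : V 0 = 0) {L : ℕ}
    (hV : ∀ ℓ : ℕ, 1 ≤ ℓ → ℓ + 1 ≤ L →
      (Finset.univ.filter fun j : Fin (p (ℓ + 1)) => V ℓ j ≠ 0).card ≤ s (ℓ + 1))
    {ℓ : ℕ} (hℓ : 1 ≤ ℓ) (hℓL : ℓ ≤ L) :
    ∃ B : Fin ((p 1 + 1) * ∏ j ∈ Finset.Icc 2 ℓ, (s j + 1)) → Set ℝ,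
      IsConstPartition (fun t => skipDhnHidden p W V b ℓ ((1 - t) • x₁ + t • x₂))
        (Set.Icc 0 1) B := by
  induction ℓ, hℓ using Nat.le_induction with
  | base =>
    obtain ⟨B, hB⟩ := exists_isConstPartition_skipDhnHidden_one x₁ x₂ hV0 (W := W) (b := b)
      Set.ordConnected_Icc
    exact hB.exists_fin (by simp)
  | succ ℓ hℓ ih =>
    obtain ⟨B, hB⟩ := ih (by omega)
    choose y hy using hB.exists_eq
    choose C hC using fun i => exists_isConstPartition_skipDhnHidden_succ x₁ x₂ ℓ
      (hB.ordConnected i) (y i) (hy i) _ (hV ℓ hℓ hℓL) fun j hj => by simpa using hj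
    exact (IsConstPartition.refine hB.pairwise_disjoint hB.iUnion_eq hC).exists_fin
      (by simp [Finset.prod_Icc_succ_top (by omega : 2 ≤ ℓ + 1), mul_assoc])

end SkipDhn

open Classical in
theorem skip_dhn_restriction_piecewise_constant_general (L : ℕ) (hL : 1 ≤ L)
    (p : ℕ → ℕ) (s : ℕ → ℕ)
    (W : ∀ ℓ : ℕ, Matrix (Fin (p (ℓ + 1))) (Fin (p ℓ)) ℝ)
    (V : ∀ ℓ : ℕ, Matrix (Fin (p (ℓ + 1))) (Fin (p 0)) ℝ)
    (b : ∀ ℓ : ℕ, Fin (p (ℓ + 1)) → ℝ)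
    (hV0 : V 0 = 0)
    (hV : ∀ ℓ : ℕ, 1 ≤ ℓ → ℓ + 1 ≤ L →
      (Finset.univ.filter fun j : Fin (p (ℓ + 1)) => V ℓ j ≠ 0).card ≤ s (ℓ + 1))
    (w : Fin (p L) → ℝ) (c : ℝ)
    (f : (Fin (p 0) → ℝ) → ℝ)
    (hf : ∀ x, f x = (∑ j, w j * skipDhnHidden p W V b L x j) - c)
    (x₁ x₂ : Fin (p 0) → ℝ) :
    PiecewiseConstOn (fun t : ℝ => f ((1 - t) • x₁ + t • x₂))
      ((p 1 + 1) * ∏ ℓ ∈ Finset.Icc 2 L, (s ℓ + 1)) := by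
  obtain ⟨B, hB⟩ :=
    exists_isConstPartition_skipDhnHidden x₁ x₂ s hV0 hV (W := W) (b := b) hL le_rfl
  have hfB := hB.of_eq_imp (g' := fun t => f ((1 - t) • x₁ + t • x₂)) fun t _ t' _ h => by
    simp only [hf, h]
  exact ⟨B, hfB.ordConnected, hfB.pairwise_disjoint, hfB.iUnion_eq, hfB.const⟩

open Classical in
/-- The restriction of a skip-DHN to a segment is piecewise constant with at
most `(p₁+1)·∏_{ℓ=2}^L (s_ℓ+1)` pieces. -/
theorem skip_dhn_restriction_piecewise_constant (L : ℕ) (hL : 1 ≤ L)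
    (p : ℕ → ℕ) (hd : 1 ≤ p 0) (s : ℕ → ℕ)
    (W : ∀ ℓ : ℕ, Matrix (Fin (p (ℓ + 1))) (Fin (p ℓ)) ℝ)
    (V : ∀ ℓ : ℕ, Matrix (Fin (p (ℓ + 1))) (Fin (p 0)) ℝ)
    (b : ∀ ℓ : ℕ, Fin (p (ℓ + 1)) → ℝ)
    (hV0 : V 0 = 0)
    (hV : ∀ ℓ : ℕ, 1 ≤ ℓ → ℓ + 1 ≤ L →
      (Finset.univ.filter fun j : Fin (p (ℓ + 1)) => V ℓ j ≠ 0).card ≤ s (ℓ + 1))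
    (w : Fin (p L) → ℝ) (c : ℝ)
    (f : (Fin (p 0) → ℝ) → ℝ)
    (hf : ∀ x, f x = (∑ j, w j * skipDhnHidden p W V b L x j) - c)
    (x₁ x₂ : Fin (p 0) → ℝ)
    (hx₁ : x₁ ∈ Set.Icc (0 : Fin (p 0) → ℝ) 1)
    (hx₂ : x₂ ∈ Set.Icc (0 : Fin (p 0) → ℝ) 1) :
    PiecewiseConstOn (fun t : ℝ => f ((1 - t) • x₁ + t • x₂))
      ((p 1 + 1) * ∏ ℓ ∈ Finset.Icc 2 L, (s ℓ + 1)) :=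
  skip_dhn_restriction_piecewise_constant_general L hL p s W V b hV0 hV w c f hf x₁ x₂
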